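/- Let K be a left distributive, weakly right distributive k-algebra with conjugation with k-valued trace and norm, and D ∈ k. Then K is associative if and only if the Cayley-Dickson double K ×_D K is left alternative. -/

import Mathlib

/-- A `k`-algebra with conjugation: a left `k`-vector space `K` with a
(not necessarily distributive or associative) multiplication and identity,
where `k` sits centrally (encoded via scalar compatibility), together with a
self-inverse `k`-linear conjugation fixing `k`. -/
structure ConjAlg (k : Type*) [Field k] (K : Type*) [AddCommGroup K] [Module k K] where
  mul : K → K → K
  one : K
  one_mul : ∀ x, mul one x = x
  mul_one : ∀ x, mul x one = x
  smul_mul : ∀ (c : k) (x y : K), mul (c • x) y = c • mul x y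
  mul_smul : ∀ (c : k) (x y : K), mul x (c • y) = c • mul x y
  conj : K →ₗ[k] K
  conj_conj : ∀ x, conj (conj x) = x
  conj_one : conj one = one

namespace ConjAlg

variable {k : Type*} [Field k] {K : Type*} [AddCommGroup K] [Module k K]

/-- The norm `n(a) = ā a`. -/
def n (A : ConjAlg k K) (x : K) : K := A.mul (A.conj x) x

/-- The trace `t(a) = a + ā`. -/
def t (A : ConjAlg k K) (x : K) : K := x + A.conj x

/-- Membership in (the copy of) `k` inside `K`. -/
def InK (A : ConjAlg k K) (x : K) : Prop := ∃ c : k, x = c • A.one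

/-- Weak right distributivity: `(a+b)c = ac + bc` whenever `a ∈ k`. -/
def WeakRightDistrib (A : ConjAlg k K) : Prop :=
  ∀ (c : k) (b y : K), A.mul (c • A.one + b) y = A.mul (c • A.one) y + A.mul b y

/-- Weak left distributivity: `c(a+b) = ca + cb` whenever `a ∈ k`. -/
def WeakLeftDistrib (A : ConjAlg k K) : Prop :=
  ∀ (c : k) (b y : K), A.mul y (c • A.one + b) = A.mul y (c • A.one) + A.mul y b

/-- Full left distributivity. -/
def LeftDistrib (A : ConjAlg k K) : Prop :=
  ∀ x y z : K, A.mul x (y + z) = A.mul x y + A.mul x z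

/-- Full right distributivity. -/
def RightDistrib (A : ConjAlg k K) : Prop :=
  ∀ x y z : K, A.mul (x + y) z = A.mul x z + A.mul y z

/-- Left alternativity: `a(ab) = a²b`. -/
def LeftAlt (A : ConjAlg k K) : Prop :=
  ∀ a b : K, A.mul a (A.mul a b) = A.mul (A.mul a a) b

/-- The trace is `k`-valued. -/
def TraceKValued (A : ConjAlg k K) : Prop := ∀ x : K, A.InK (A.t x)

/-- The norm is `k`-valued. -/
def NormKValued (A : ConjAlg k K) : Prop := ∀ x : K, A.InK (A.n x)

/-- The norm is anisotropic. -/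
def Anisotropic (A : ConjAlg k K) : Prop := ∀ x : K, x ≠ 0 → A.n x ≠ 0

/-- The norm is symmetric: `n(ā) = n(a)`. -/
def NormSymmetric (A : ConjAlg k K) : Prop := ∀ x : K, A.n (A.conj x) = A.n x

end ConjAlg


/-- The Cayley-Dickson double multiplication: `(a,b)(c,d) = (ac + D·d·b̄, ā·d + c·b)`. -/
def cdMul {k : Type*} [Field k] {K : Type*} [AddCommGroup K] [Module k K]
    (A : ConjAlg k K) (D : k) (x y : K × K) : K × K :=
  (A.mul x.1 y.1 + D • A.mul y.2 (A.conj x.2),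
   A.mul (A.conj x.1) y.2 + A.mul y.1 x.2)

/-- The Cayley-Dickson double conjugation: `(a,b)‾ = (ā, −b)`. -/
def cdConj {k : Type*} [Field k] {K : Type*} [AddCommGroup K] [Module k K]
    (A : ConjAlg k K) (x : K × K) : K × K :=
  (A.conj x.1, -x.2)

/-!
Writing `ā = t(a) - a`, the second component of `x(xy) = (xx)y` at `x = (a, c)`, `y = (b, 0)`
reads `t(a)·bc - a(bc) + (ab)c = t(a)·bc`, which is associativity. Conversely, in an associative
`K` left multiplication by an element `u` of nonzero norm can be cancelled (`n(u)⁻¹ ū` is a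
two-sided inverse), and this forces right distributivity. With both distributive laws,
`āa = aā = n(a)` and `a² = t(a)a - n(a)` reduce both sides of left alternativity in the double
to the same expression.
-/

namespace ConjAlg

variable {k : Type*} [Field k] {K : Type*} [AddCommGroup K] [Module k K] (A : ConjAlg k K)

def Assoc : Prop := ∀ a b c : K, A.mul (A.mul a b) c = A.mul a (A.mul b c)

def RightDistribAt (u : K) : Prop := ∀ v z : K, A.mul (u + v) z = A.mul u z + A.mul v z

protected lemma zero_mul (y : K) : A.mul 0 y = 0 := by
  simpa using A.smul_mul 0 0 y

protected lemma mul_zero (x : K) : A.mul x 0 = 0 := by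
  simpa using A.mul_smul 0 x 0

protected lemma neg_mul (x y : K) : A.mul (-x) y = -A.mul x y := by
  simpa using A.smul_mul (-1) x y

protected lemma mul_neg (x y : K) : A.mul x (-y) = -A.mul x y := by
  simpa using A.mul_smul (-1) x y

lemma smul_one_mul (c : k) (y : K) : A.mul (c • A.one) y = c • y := by
  rw [A.smul_mul, A.one_mul]

lemma mul_smul_one (c : k) (x : K) : A.mul x (c • A.one) = c • x := by
  rw [A.mul_smul, A.mul_one]

protected lemma mul_sub (hld : A.LeftDistrib) (x y z : K) :
    A.mul x (y - z) = A.mul x y - A.mul x z := by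
  rw [sub_eq_add_neg, hld, A.mul_neg, ← sub_eq_add_neg]

protected lemma sub_mul (hrd : A.RightDistrib) (x y z : K) :
    A.mul (x - y) z = A.mul x z - A.mul y z := by
  rw [sub_eq_add_neg, hrd, A.neg_mul, ← sub_eq_add_neg]

lemma RightDistrib.weakRightDistrib {A : ConjAlg k K} (hrd : A.RightDistrib) :
    A.WeakRightDistrib :=
  fun _ _ _ => hrd _ _ _

lemma smul_one_add_mul (hwr : A.WeakRightDistrib) (c : k) (b y : K) :
    A.mul (c • A.one + b) y = c • y + A.mul b y := by
  rw [hwr, A.smul_one_mul]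

lemma smul_one_sub_mul (hwr : A.WeakRightDistrib) (c : k) (b y : K) :
    A.mul (c • A.one - b) y = c • y - A.mul b y := by
  rw [sub_eq_add_neg, A.smul_one_add_mul hwr, A.neg_mul, ← sub_eq_add_neg]

section TraceNorm

variable {A} {u : K} {τ ν : k}

lemma conj_eq_of_t_eq (ht : A.t u = τ • A.one) : A.conj u = τ • A.one - u := by
  rw [← ht, t, add_sub_cancel_left]

lemma mul_self_eq_of_t_eq_of_n_eq (hwr : A.WeakRightDistrib) (ht : A.t u = τ • A.one)
    (hn : A.n u = ν • A.one) : A.mul u u = τ • u - ν • A.one := by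
  rw [← hn, n, conj_eq_of_t_eq ht, A.smul_one_sub_mul hwr, sub_sub_cancel]

lemma mul_conj_eq_of_t_eq_of_n_eq (hld : A.LeftDistrib) (hwr : A.WeakRightDistrib)
    (ht : A.t u = τ • A.one) (hn : A.n u = ν • A.one) : A.mul u (A.conj u) = ν • A.one := by
  rw [conj_eq_of_t_eq ht, A.mul_sub hld, A.mul_smul_one,
    mul_self_eq_of_t_eq_of_n_eq hwr ht hn, sub_sub_cancel]

lemma t_smul_one_add (ht : A.t u = τ • A.one) (c : k) :
    A.t (c • A.one + u) = (2 * c + τ) • A.one := by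
  rw [t, map_add, map_smul, A.conj_one, conj_eq_of_t_eq ht]
  module

lemma n_smul_one_add (hld : A.LeftDistrib) (hwr : A.WeakRightDistrib)
    (ht : A.t u = τ • A.one) (hn : A.n u = ν • A.one) (c : k) :
    A.n (c • A.one + u) = (c * c + c * τ + ν) • A.one := by
  have hconj : A.conj (c • A.one + u) = (c + τ) • A.one - u := by
    rw [map_add, map_smul, A.conj_one, conj_eq_of_t_eq ht]
    module
  rw [n, hconj, A.smul_one_sub_mul hwr, hld, A.mul_smul_one,
    mul_self_eq_of_t_eq_of_n_eq hwr ht hn]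
  module

end TraceNorm

section RightDistrib

variable {A}

lemma rightDistribAt_of_mul_eq_one (hld : A.LeftDistrib) (hwr : A.WeakRightDistrib)
    (hassoc : A.Assoc) {u w : K} (hwu : A.mul w u = A.one) (huw : A.mul u w = A.one) :
    A.RightDistribAt u := by
  have cancel : ∀ x, A.mul u (A.mul w x) = x := fun x => by rw [← hassoc, huw, A.one_mul]
  intro v z
  calc A.mul (u + v) z = A.mul u (A.mul (A.mul w (u + v)) z) := by rw [hassoc, cancel]
    _ = A.mul u (A.mul ((1 : k) • A.one + A.mul w v) z) := by rw [hld, hwu, one_smul]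
    _ = A.mul u z + A.mul v z := by rw [A.smul_one_add_mul hwr, one_smul, hld, hassoc, cancel]

lemma rightDistribAt_of_n_eq (hld : A.LeftDistrib) (hwr : A.WeakRightDistrib)
    (hassoc : A.Assoc) {u : K} {τ ν : k} (ht : A.t u = τ • A.one) (hn : A.n u = ν • A.one)
    (hν : ν ≠ 0) : A.RightDistribAt u := by
  refine rightDistribAt_of_mul_eq_one hld hwr hassoc (w := ν⁻¹ • A.conj u) ?_ ?_
  · rw [A.smul_mul, ← n, hn, smul_smul, inv_mul_cancel₀ hν, one_smul]
  · rw [A.mul_smul, mul_conj_eq_of_t_eq_of_n_eq hld hwr ht hn, smul_smul,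
      inv_mul_cancel₀ hν, one_smul]

lemma RightDistribAt.of_smul_one_add (hwr : A.WeakRightDistrib) {u : K} {c : k}
    (h : A.RightDistribAt (c • A.one + u)) : A.RightDistribAt u := by
  intro v z
  have := h v z
  rwa [add_assoc, A.smul_one_add_mul hwr, A.smul_one_add_mul hwr, add_assoc,
    add_right_inj] at this

/-- Either `u` or `1 + u` has nonzero norm, since the two norms differ by `1 + t(u)`. -/
lemma rightDistribAt_of_t_ne (hld : A.LeftDistrib) (hwr : A.WeakRightDistrib)
    (hn : A.NormKValued) (hassoc : A.Assoc) {u : K} {τ : k} (ht : A.t u = τ • A.one)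
    (hτ : τ ≠ -1) : A.RightDistribAt u := by
  obtain ⟨ν, hnu⟩ := hn u
  by_cases hν : ν = 0
  · refine RightDistribAt.of_smul_one_add hwr (c := 1) <|
      rightDistribAt_of_n_eq hld hwr hassoc (t_smul_one_add ht 1)
        (n_smul_one_add hld hwr ht hnu 1) ?_
    rw [hν]
    contrapose! hτ
    linear_combination hτ
  · exact rightDistribAt_of_n_eq hld hwr hassoc ht hnu hν

lemma t_add (u v : K) : A.t (u + v) = A.t u + A.t v := by
  rw [t, t, t, map_add, add_add_add_comm]

/-- Only `t(u) = t(v) = -1` escapes `rightDistribAt_of_t_ne`; then `t(u + v) = -2 ≠ -1`, and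
`u = (u + v) + (-v)`. -/
theorem rightDistrib_of_assoc (hld : A.LeftDistrib) (hwr : A.WeakRightDistrib)
    (ht : A.TraceKValued) (hn : A.NormKValued) (hassoc : A.Assoc) : A.RightDistrib := by
  intro u v z
  obtain ⟨τ, htu⟩ := ht u
  obtain ⟨σ, htv⟩ := ht v
  by_cases hτ : τ = -1
  swap
  · exact rightDistribAt_of_t_ne hld hwr hn hassoc htu hτ v z
  by_cases hσ : σ = -1
  swap
  · rw [add_comm u, add_comm (A.mul u z)]
    exact rightDistribAt_of_t_ne hld hwr hn hassoc htv hσ u z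
  have htuv : A.t (u + v) = (τ + σ) • A.one := by rw [t_add, htu, htv, add_smul]
  have huv := rightDistribAt_of_t_ne hld hwr hn hassoc htuv
    (fun h => one_ne_zero (by rw [hτ, hσ] at h; linear_combination -h)) (-v) z
  rw [add_neg_cancel_right, A.neg_mul] at huv
  rw [huv]
  abel

end RightDistrib

section Double

variable {A}

lemma mul_mul_self_eq_of_t_eq_of_n_eq (hrd : A.RightDistrib) (hassoc : A.Assoc) {u : K}
    {τ ν : k} (ht : A.t u = τ • A.one) (hn : A.n u = ν • A.one) (w : K) : A.mul u (A.mul u w) = τ • A.mul u w - ν • w := by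
  rw [← hassoc, mul_self_eq_of_t_eq_of_n_eq hrd.weakRightDistrib ht hn, A.sub_mul hrd,
    A.smul_mul, A.smul_one_mul]

theorem assoc_of_cdMul_leftAlt (hwr : A.WeakRightDistrib) (ht : A.TraceKValued) (D : k)
    (h : ∀ x y : K × K, cdMul A D x (cdMul A D x y) = cdMul A D (cdMul A D x x) y) :
    A.Assoc := by
  intro a b c
  obtain ⟨τ, hta⟩ := ht a
  have h2 := congrArg Prod.snd (h (a, c) (b, 0))
  simp only [cdMul, A.mul_zero, A.zero_mul, smul_zero, add_zero, zero_add] at h2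
  rw [conj_eq_of_t_eq hta, A.smul_one_sub_mul hwr, A.smul_one_sub_mul hwr, sub_add_cancel,
    A.mul_smul] at h2
  linear_combination (norm := module) h2

theorem cdMul_leftAlt_of_assoc (hld : A.LeftDistrib) (hrd : A.RightDistrib)
    (ht : A.TraceKValued) (hn : A.NormKValued) (hassoc : A.Assoc)
    (D : k) (x y : K × K) : cdMul A D x (cdMul A D x y) = cdMul A D (cdMul A D x x) y := by
  have hwr := hrd.weakRightDistrib
  obtain ⟨a, b⟩ := x
  obtain ⟨c, d⟩ := y
  obtain ⟨τa, hta⟩ := ht a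
  obtain ⟨νa, hna⟩ := hn a
  obtain ⟨τb, htb⟩ := ht b
  obtain ⟨νb, hnb⟩ := hn b
  have hnb' : A.mul (A.conj b) b = νb • A.one := hnb
  have hsq : cdMul A D (a, b) (a, b) = (A.mul a a + (D * νb) • A.one, τa • b) := by
    have hta' : A.conj a + a = τa • A.one := by rw [add_comm]; exact hta
    rw [cdMul, mul_conj_eq_of_t_eq_of_n_eq hld hwr htb hnb, ← hrd, hta', A.smul_one_mul,
      smul_smul]
  rw [hsq]
  ext
  · simp only [cdMul, hld _ _ _, hrd _ _ _, hassoc _ _ _, A.smul_mul, A.mul_smul, A.one_mul,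
      A.mul_one, map_smul, conj_eq_of_t_eq hta, mul_conj_eq_of_t_eq_of_n_eq hld hwr htb hnb,
      A.smul_one_sub_mul hwr, A.sub_mul hrd]
    module
  · simp only [cdMul, hld _ _ _, hrd _ _ _, hassoc _ _ _, A.smul_mul, A.mul_smul, A.one_mul,
      A.mul_one, map_add, map_sub, map_smul, A.conj_one, conj_eq_of_t_eq hta, A.smul_one_sub_mul hwr,
      A.mul_sub hld, A.sub_mul hrd, mul_self_eq_of_t_eq_of_n_eq hwr hta hna,
      mul_mul_self_eq_of_t_eq_of_n_eq hrd hassoc hta hna, hnb']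
    module

end Double

end ConjAlg

theorem stmt12 {k : Type*} [Field k] {K : Type*} [AddCommGroup K] [Module k K] (A : ConjAlg k K) (D : k)
    (hld : A.LeftDistrib) (hwr : A.WeakRightDistrib)
    (ht : A.TraceKValued) (hn : A.NormKValued) :
    (∀ a b c : K, A.mul (A.mul a b) c = A.mul a (A.mul b c)) ↔
    (∀ x y : K × K, cdMul A D x (cdMul A D x y) = cdMul A D (cdMul A D x x) y) :=
  ⟨fun hassoc => A.cdMul_leftAlt_of_assoc hld (A.rightDistrib_of_assoc hld hwr ht hn hassoc)
    ht hn hassoc D,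
   A.assoc_of_cdMul_leftAlt hwr ht D⟩
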